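/- Let p⃗₁, p⃗₂, p⃗₃, p⃗₄ ∈ ℂ² and m > 0 satisfy ‖p⃗₁ − p⃗₂‖ ≥ m and ‖p⃗₃ − p⃗₄‖ ≥ m, and suppose ‖(p⃗₁ − p⃗₃) − (p⃗₂ − p⃗₄)‖ ≥ 16·‖(p⃗₁ + p⃗₃) − (p⃗₂ + p⃗₄)‖. Then ‖(p⃗₁ − p⃗₃) − (p⃗₂ − p⃗₄)‖ ≥ 32m/√257, and for every (α₀, β₀) ∈ ℝ² with ‖(α₀, β₀)‖ ≥ 1/8, ‖G_{1,3}(α₀, β₀) − G_{2,4}(α₀, β₀)‖ ≥ (1/32)·‖(p⃗₁ − p⃗₃) − (p⃗₂ − p⃗₄)‖ ≥ m/√257, where G_{1,3}, G_{2,4} are as defined below. -/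

import Mathlib

noncomputable section

/-- `ℂ²` with its Euclidean (Hermitian) metric. -/
abbrev C2 := EuclideanSpace ℂ (Fin 2)

/-- The point `(a + b·i, c + d·i)` of `ℂ²`. -/
def pC (a b c d : ℝ) : C2 :=
  WithLp.toLp 2 (fun i : Fin 2 => if i = 0 then Complex.mk a b else Complex.mk c d)

/-- The point of `ℝ⁶` with coordinates `(x₁, …, x₆)`. -/
def pt6 (x₁ x₂ x₃ x₄ x₅ x₆ : ℝ) : EuclideanSpace ℝ (Fin 6) :=
  WithLp.toLp 2 (fun i : Fin 6 => if i = 0 then x₁ else if i = 1 then x₂ else if i = 2 then x₃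
    else if i = 3 then x₄ else if i = 4 then x₅ else x₆)

/-- The parameterization `G : ℝ² → ℝ⁶` of the real 2-plane corresponding to the auxiliary
complex line associated to the points `(a + b·i, c + d·i)` and `(a' + b'·i, c' + d'·i)`
of `ℂ²`. -/
def Gmap (a b c d a' b' c' d' : ℝ) (α β : ℝ) : EuclideanSpace ℝ (Fin 6) :=
  pt6 ((a + a') / 2) ((b + b') / 2) ((c + c') / 2) ((d + d') / 2) 0 0
    + α • pt6 ((c - c') / 2) ((d - d') / 2) (-((a - a') / 2)) (-((b - b') / 2)) 1 0
    + β • pt6 (-((d - d') / 2)) ((c - c') / 2) ((b - b') / 2) (-((a - a') / 2)) 0 1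

/-! With `D = (p₁ - p₃) - (p₂ - p₄)` and `S = (p₁ + p₃) - (p₂ + p₄)`, the parallelogram law for
`p₁ - p₂` and `p₃ - p₄` gives `‖D‖² + ‖S‖² ≥ 4m²`, which together with `‖S‖ ≤ ‖D‖/16` bounds `‖D‖`
from below. The difference `G₁₃(α, β) - G₂₄(α, β)` is the point `(S + (α + βi)·jD)/2` of `ℂ²`,
where `j(z, w) = (w, -z)` is quaternionic multiplication by `j`, an isometry; so the reverse
triangle inequality gives `‖G₁₃(α, β) - G₂₄(α, β)‖ ≥ (|α + βi|·‖D‖ - ‖S‖)/2 ≥ ‖D‖/32`. -/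

lemma le_norm_sub_of_norm_add_le {𝕜 E : Type*} [RCLike 𝕜] [SeminormedAddCommGroup E]
    [InnerProductSpace 𝕜 E] {u v : E} {m : ℝ} (hm : 0 ≤ m) (hu : m ≤ ‖u‖) (hv : m ≤ ‖v‖)
    (h : 16 * ‖u + v‖ ≤ ‖u - v‖) : 32 * m / √257 ≤ ‖u - v‖ := by
  have hpar := parallelogram_law_with_norm 𝕜 u v
  have hsq : (32 * m) ^ 2 ≤ 257 * ‖u - v‖ ^ 2 := by
    nlinarith [mul_self_le_mul_self hm hu, mul_self_le_mul_self hm hv,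
      mul_self_le_mul_self (by positivity) h]
  rw [div_le_iff₀ (by positivity)]
  refine le_of_pow_le_pow_left₀ two_ne_zero (by positivity) ?_
  rw [mul_pow (‖u - v‖), Real.sq_sqrt (by norm_num)]
  linarith

lemma mul_norm_sub_norm_le_norm_add_smul {𝕜 E : Type*} [NormedField 𝕜]
    [SeminormedAddCommGroup E] [NormedSpace 𝕜 E] (x y : E) {c : 𝕜} {r : ℝ} (hc : r ≤ ‖c‖) :
    r * ‖y‖ - ‖x‖ ≤ ‖x + c • y‖ := by
  have htri := norm_sub_le_norm_add (c • y) x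
  rw [norm_smul, add_comm] at htri
  nlinarith [norm_nonneg y]

def quatJ (x : C2) : C2 := WithLp.toLp 2 ![x 1, -x 0]

lemma norm_quatJ (x : C2) : ‖quatJ x‖ = ‖x‖ := by
  simp [quatJ, EuclideanSpace.norm_eq, Fin.sum_univ_two, add_comm]

lemma norm_Gmap_sub_Gmap (a₁ b₁ c₁ d₁ a₂ b₂ c₂ d₂ a₃ b₃ c₃ d₃ a₄ b₄ c₄ d₄ α β : ℝ) :
    ‖Gmap a₁ b₁ c₁ d₁ a₃ b₃ c₃ d₃ α β - Gmap a₂ b₂ c₂ d₂ a₄ b₄ c₄ d₄ α β‖ =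
      ‖(2⁻¹ : ℂ) • ((pC a₁ b₁ c₁ d₁ + pC a₃ b₃ c₃ d₃ - (pC a₂ b₂ c₂ d₂ + pC a₄ b₄ c₄ d₄)) +
        (⟨α, β⟩ : ℂ) •
          quatJ (pC a₁ b₁ c₁ d₁ - pC a₃ b₃ c₃ d₃ - (pC a₂ b₂ c₂ d₂ - pC a₄ b₄ c₄ d₄)))‖ := by
  rw [EuclideanSpace.norm_eq, EuclideanSpace.norm_eq]
  congr 1
  simp only [Gmap, pt6, Fin.isValue, ite_self, PiLp.sub_apply, PiLp.add_apply, PiLp.smul_apply,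
    smul_eq_mul, mul_ite, mul_neg, mul_one, mul_zero, Real.norm_eq_abs, sq_abs, Fin.sum_univ_six,
    ↓reduceIte, one_ne_zero, Fin.reduceEq, zero_add, add_zero, sub_self, ne_eq,
    OfNat.ofNat_ne_zero, not_false_eq_true, zero_pow, pC, quatJ, neg_sub, smul_add,
    Complex.sq_norm, Complex.normSq_apply, Complex.add_re, Complex.mul_re, Complex.inv_re,
    Complex.re_ofNat, div_self_mul_self', Complex.sub_re, Complex.inv_im,
    Complex.im_ofNat, neg_zero, zero_div, Complex.sub_im, Complex.add_im, zero_mul, sub_zero,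
    Complex.mul_im, Fin.sum_univ_two, Matrix.cons_val_zero, Matrix.cons_val_one,
    Matrix.cons_val_fin_one]
  ring

/-- Case 2 in the proof of Claim 5.3. -/
theorem statement19 (a₁ b₁ c₁ d₁ a₂ b₂ c₂ d₂ a₃ b₃ c₃ d₃ a₄ b₄ c₄ d₄ : ℝ)
    (p₁ p₂ p₃ p₄ : C2)
    (hp₁ : p₁ = pC a₁ b₁ c₁ d₁) (hp₂ : p₂ = pC a₂ b₂ c₂ d₂)
    (hp₃ : p₃ = pC a₃ b₃ c₃ d₃) (hp₄ : p₄ = pC a₄ b₄ c₄ d₄)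
    (m : ℝ) (hm : 0 < m)
    (h₁₂ : m ≤ ‖p₁ - p₂‖) (h₃₄ : m ≤ ‖p₃ - p₄‖)
    (h : 16 * ‖(p₁ + p₃) - (p₂ + p₄)‖ ≤ ‖(p₁ - p₃) - (p₂ - p₄)‖) :
    32 * m / Real.sqrt 257 ≤ ‖(p₁ - p₃) - (p₂ - p₄)‖ ∧
    ∀ α₀ β₀ : ℝ, 1 / 8 ≤ Real.sqrt (α₀ ^ 2 + β₀ ^ 2) →
      1 / 32 * ‖(p₁ - p₃) - (p₂ - p₄)‖ ≤
          ‖Gmap a₁ b₁ c₁ d₁ a₃ b₃ c₃ d₃ α₀ β₀ - Gmap a₂ b₂ c₂ d₂ a₄ b₄ c₄ d₄ α₀ β₀‖ ∧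
      m / Real.sqrt 257 ≤
          ‖Gmap a₁ b₁ c₁ d₁ a₃ b₃ c₃ d₃ α₀ β₀ - Gmap a₂ b₂ c₂ d₂ a₄ b₄ c₄ d₄ α₀ β₀‖ := by
  have hD : 32 * m / √257 ≤ ‖(p₁ - p₃) - (p₂ - p₄)‖ := by
    rw [sub_sub_sub_comm] at h ⊢
    rw [add_sub_add_comm] at h
    exact le_norm_sub_of_norm_add_le (𝕜 := ℂ) hm.le h₁₂ h₃₄ h
  refine ⟨hD, fun α β hαβ => ?_⟩
  have hc : 1 / 8 ≤ ‖(⟨α, β⟩ : ℂ)‖ := by rwa [Complex.norm_eq_sqrt_sq_add_sq]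
  have hG : 1 / 32 * ‖(p₁ - p₃) - (p₂ - p₄)‖ ≤
      ‖Gmap a₁ b₁ c₁ d₁ a₃ b₃ c₃ d₃ α β - Gmap a₂ b₂ c₂ d₂ a₄ b₄ c₄ d₄ α β‖ := by
    rw [norm_Gmap_sub_Gmap, ← hp₁, ← hp₂, ← hp₃, ← hp₄, norm_smul, norm_inv, Complex.norm_two]
    have hJ := mul_norm_sub_norm_le_norm_add_smul
      ((p₁ + p₃) - (p₂ + p₄)) (quatJ ((p₁ - p₃) - (p₂ - p₄))) hc
    rw [norm_quatJ] at hJ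
    linarith
  rw [mul_div_assoc] at hD
  exact ⟨hG, by linarith⟩
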